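/- arXiv:1912.10682 — 3 statements merged into one kernel-verified Lean document; each statement's English description precedes it below -/
import Mathlib

section
/- Let A and B be densely defined unbounded linear operators on a Hilbert space H with a common domain D = dom(A) = dom(B). Assume: (i) for all ξ, η ∈ D, ⟨Aξ, Bη⟩ = 0 (the ranges of A and B are mutually orthogonal); (ii) there exist orthogonal projections p, q on H with pq = 0, p(D) ⊆ D, q(D) ⊆ D, and for all ξ ∈ D, Aξ = A(pξ) and Bξ = B(qξ). Then A + B (with domain D) is closable if and only if both A and B are closable. -/
/-
Projecting by `p` turns `A + B` into `A` (and `q` turns it into `B`), since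
`B p = B q p = 0` with `q p = (p q)* = 0`; so closability passes from `A + B` to the
summands. Conversely, orthogonality of the ranges gives `‖A ξ‖, ‖B ξ‖ ≤ ‖(A + B) ξ‖`,
so if `(A + B) ξₙ` converges then `A ξₙ` and `B ξₙ` are Cauchy; their limits vanish by
closability of `A` and `B`, hence so does the limit of `(A + B) ξₙ`.
-/

open Filter Topology

/-- A densely defined operator is closable (preclosed) if `ξₙ → 0` and `T ξₙ → η`
imply `η = 0`. -/
def SeqClosable {H H' : Type*} [NormedAddCommGroup H] [NormedSpace ℂ H]
    [NormedAddCommGroup H'] [NormedSpace ℂ H']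
    (D : Submodule ℂ H) (T : D →ₗ[ℂ] H') : Prop :=
  ∀ (ξ : ℕ → D) (η : H'),
    Tendsto (fun n => ((ξ n : H))) atTop (𝓝 0) →
    Tendsto (fun n => T (ξ n)) atTop (𝓝 η) → η = 0

theorem CauchySeq.of_dist_le {ι α β : Type*} [Nonempty ι] [SemilatticeSup ι]
    [PseudoMetricSpace α] [PseudoMetricSpace β] {f : ι → α} {g : ι → β} (hg : CauchySeq g)
    (hfg : ∀ m n, dist (f m) (f n) ≤ dist (g m) (g n)) : CauchySeq f := by
  rw [cauchySeq_iff_tendsto_dist_atTop_0] at hg ⊢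
  exact squeeze_zero (fun _ => dist_nonneg) (fun mn => hfg mn.1 mn.2) hg

section Orthogonal

variable {𝕜 E : Type*} [RCLike 𝕜] [NormedAddCommGroup E] [InnerProductSpace 𝕜 E]

theorem norm_le_norm_add_of_inner_eq_zero {x y : E} (h : inner 𝕜 x y = 0) : ‖x‖ ≤ ‖x + y‖ := by
  have hsq := norm_add_sq_eq_norm_sq_add_norm_sq_of_inner_eq_zero (𝕜 := 𝕜) x y h
  nlinarith [norm_nonneg x, norm_nonneg (x + y), mul_self_nonneg ‖y‖]

theorem norm_le_norm_add_of_inner_eq_zero' {x y : E} (h : inner 𝕜 x y = 0) : ‖y‖ ≤ ‖x + y‖ := by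
  rw [add_comm]
  exact norm_le_norm_add_of_inner_eq_zero (inner_eq_zero_symm.mp h)

end Orthogonal

theorem ContinuousLinearMap.comp_eq_zero_comm_of_isSelfAdjoint {𝕜 E : Type*} [RCLike 𝕜]
    [NormedAddCommGroup E] [InnerProductSpace 𝕜 E] [CompleteSpace E] {p q : E →L[𝕜] E}
    (hp : IsSelfAdjoint p) (hq : IsSelfAdjoint q) (hpq : p.comp q = 0) : q.comp p = 0 := by
  have h : star (p * q) = star 0 := congrArg star hpq
  rwa [star_mul, hp.star_eq, hq.star_eq, star_zero] at h

namespace SeqClosable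

variable {H H' : Type*} [NormedAddCommGroup H] [NormedSpace ℂ H]
  [NormedAddCommGroup H'] [NormedSpace ℂ H'] {D : Submodule ℂ H}

theorem of_comp_eq {T S : D →ₗ[ℂ] H'} (hT : SeqClosable D T) (r : H →L[ℂ] H)
    (hr : ∀ ξ : D, r ξ ∈ D) (hS : ∀ ξ : D, T ⟨r ξ, hr ξ⟩ = S ξ) : SeqClosable D S :=
  fun ξ η hξ hSξ => hT (fun n => ⟨r (ξ n), hr (ξ n)⟩) η
    ((r.continuous.tendsto' 0 0 (map_zero r)).comp hξ) (by simpa only [hS] using hSξ)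

theorem add [CompleteSpace H'] {A B : D →ₗ[ℂ] H'} (hA : SeqClosable D A) (hB : SeqClosable D B)
    (hA_le : ∀ ξ, ‖A ξ‖ ≤ ‖(A + B) ξ‖) (hB_le : ∀ ξ, ‖B ξ‖ ≤ ‖(A + B) ξ‖) :
    SeqClosable D (A + B) := by
  intro ξ η hξ hη
  have hdist {T : D →ₗ[ℂ] H'} (hT : ∀ ξ, ‖T ξ‖ ≤ ‖(A + B) ξ‖) (m n : ℕ) :
      dist (T (ξ m)) (T (ξ n)) ≤ dist ((A + B) (ξ m)) ((A + B) (ξ n)) := by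
    simpa only [dist_eq_norm, ← map_sub] using hT (ξ m - ξ n)
  obtain ⟨α, hα⟩ := cauchySeq_tendsto_of_complete (hη.cauchySeq.of_dist_le (hdist hA_le))
  obtain ⟨β, hβ⟩ := cauchySeq_tendsto_of_complete (hη.cauchySeq.of_dist_le (hdist hB_le))
  have hsum : Tendsto (fun n => (A + B) (ξ n)) atTop (𝓝 (α + β)) := hα.add hβ
  rw [tendsto_nhds_unique hη hsum, hA ξ α hξ hα, hB ξ β hξ hβ, add_zero]

end SeqClosable

theorem LinearMap.apply_mk_eq_zero_of_comp_eq_zero {R H H' : Type*} [Semiring R]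
    [AddCommMonoid H] [Module R H] [AddCommMonoid H'] [Module R H'] {D : Submodule R H}
    {T : D →ₗ[R] H'} {p q : H → H}
    (hpD : ∀ ξ : D, p ξ ∈ D) (hqD : ∀ ξ : D, q ξ ∈ D) (hT : ∀ ξ : D, T ξ = T ⟨p ξ, hpD ξ⟩)
    (hpq : ∀ x, p (q x) = 0) (ξ : D) : T ⟨q ξ, hqD ξ⟩ = 0 := by
  have hpqξ : (⟨p (q ξ), hpD ⟨q ξ, hqD ξ⟩⟩ : D) = 0 := Subtype.ext (hpq ξ)
  rw [hT, hpqξ, map_zero]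

theorem stmt_9_general {H : Type*} [NormedAddCommGroup H] [InnerProductSpace ℂ H] [CompleteSpace H]
    (D : Submodule ℂ H)
    (A B : D →ₗ[ℂ] H)
    (horth : ∀ ξ η : D, (inner ℂ (A ξ) (B η) : ℂ) = 0)
    (p q : H →L[ℂ] H)
    (hp : IsSelfAdjoint p) (hq : IsSelfAdjoint q)
    (hpq : p.comp q = 0)
    (hpD : ∀ ξ : D, p (ξ : H) ∈ D) (hqD : ∀ ξ : D, q (ξ : H) ∈ D)
    (hA : ∀ ξ : D, A ξ = A ⟨p (ξ : H), hpD ξ⟩)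
    (hB : ∀ ξ : D, B ξ = B ⟨q (ξ : H), hqD ξ⟩) :
    SeqClosable D (A + B) ↔ SeqClosable D A ∧ SeqClosable D B := by
  have hqp : q.comp p = 0 := ContinuousLinearMap.comp_eq_zero_comm_of_isSelfAdjoint hp hq hpq
  have hBp := LinearMap.apply_mk_eq_zero_of_comp_eq_zero hqD hpD hB
    (ContinuousLinearMap.ext_iff.mp hqp)
  have hAq := LinearMap.apply_mk_eq_zero_of_comp_eq_zero hpD hqD hA
    (ContinuousLinearMap.ext_iff.mp hpq)
  constructor
  · intro hAB
    refine ⟨hAB.of_comp_eq p hpD fun ξ => ?_, hAB.of_comp_eq q hqD fun ξ => ?_⟩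
    · rw [LinearMap.add_apply, ← hA, hBp, add_zero]
    · rw [LinearMap.add_apply, ← hB, hAq, zero_add]
  · rintro ⟨hA_cl, hB_cl⟩
    exact hA_cl.add hB_cl (fun ξ => norm_le_norm_add_of_inner_eq_zero (horth ξ ξ))
      (fun ξ => norm_le_norm_add_of_inner_eq_zero' (horth ξ ξ))

/-- If `A, B` have a common dense domain `D`, mutually orthogonal ranges, and there are
mutually orthogonal projections `p, q` with `A ⊆ Ap` and `B ⊆ Bq`, then `A + B` is
closable iff both `A` and `B` are. -/
theorem stmt_9 {H : Type*} [NormedAddCommGroup H] [InnerProductSpace ℂ H] [CompleteSpace H]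
    (D : Submodule ℂ H) (hD : Dense (D : Set H))
    (A B : D →ₗ[ℂ] H)
    (horth : ∀ ξ η : D, (inner ℂ (A ξ) (B η) : ℂ) = 0)
    (p q : H →L[ℂ] H)
    (hp : IsSelfAdjoint p) (hq : IsSelfAdjoint q)
    (hpidem : p.comp p = p) (hqidem : q.comp q = q)
    (hpq : p.comp q = 0)
    (hpD : ∀ ξ : D, p (ξ : H) ∈ D) (hqD : ∀ ξ : D, q (ξ : H) ∈ D)
    (hA : ∀ ξ : D, A ξ = A ⟨p (ξ : H), hpD ξ⟩)
    (hB : ∀ ξ : D, B ξ = B ⟨q (ξ : H), hqD ξ⟩) :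
    SeqClosable D (A + B) ↔ SeqClosable D A ∧ SeqClosable D B :=
  stmt_9_general D A B horth p q hp hq hpq hpD hqD hA hB
end

section
/- Let T be a closed densely defined operator on a Hilbert space H, T' a closed densely defined operator on a Hilbert space H', and G : H → H' a bounded isometry (G*G = 1). Assume G·T ⊆ T'·G (i.e., for ξ ∈ dom(T), Gξ ∈ dom(T') and GTξ = T'Gξ) and G*·T' ⊆ T·G*. Then G·T = T'·G; that is, for every ξ ∈ H, Gξ ∈ dom(T') implies ξ ∈ dom(T), and then T'Gξ = GTξ. -/
open Filter Topology

/-- An operator `T` with domain `D` is closed if its graph is closed. -/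
def IsClosedOp {H H' : Type*} [NormedAddCommGroup H] [NormedSpace ℂ H]
    [NormedAddCommGroup H'] [NormedSpace ℂ H']
    (D : Submodule ℂ H) (T : D →ₗ[ℂ] H') : Prop :=
  IsClosed {pr : H × H' | ∃ h : pr.1 ∈ D, T ⟨pr.1, h⟩ = pr.2}

theorem ContinuousLinearMap.leftInverse_adjoint_of_norm_map {𝕜 E F : Type*} [RCLike 𝕜]
    [NormedAddCommGroup E] [InnerProductSpace 𝕜 E] [CompleteSpace E]
    [NormedAddCommGroup F] [InnerProductSpace 𝕜 F] [CompleteSpace F]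
    (G : E →L[𝕜] F) (hG : ∀ x : E, ‖G x‖ = ‖x‖) :
    Function.LeftInverse (adjoint G) G := fun x =>
  congr($(G.norm_map_iff_adjoint_comp_self.mp hG) x)

theorem stmt_11_general {H H' : Type*}
    [NormedAddCommGroup H] [InnerProductSpace ℂ H] [CompleteSpace H]
    [NormedAddCommGroup H'] [InnerProductSpace ℂ H'] [CompleteSpace H']
    (DT : Submodule ℂ H)
    (DT' : Submodule ℂ H')
    (T : DT →ₗ[ℂ] H) (T' : DT' →ₗ[ℂ] H')
    (G : H →L[ℂ] H') (hG : ∀ x : H, ‖G x‖ = ‖x‖)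
    (hmem : ∀ ξ : DT, G (ξ : H) ∈ DT')
    (heq : ∀ ξ : DT, G (T ξ) = T' ⟨G (ξ : H), hmem ξ⟩)
    (hmem' : ∀ η : DT', ContinuousLinearMap.adjoint G (η : H') ∈ DT) :
    ∀ (ξ : H) (h : G ξ ∈ DT'), ∃ hξ : ξ ∈ DT, G (T ⟨ξ, hξ⟩) = T' ⟨G ξ, h⟩ := by
  intro ξ h
  have hadjoint_mapsTo : Set.MapsTo (ContinuousLinearMap.adjoint G) DT' DT :=
    fun η hη => hmem' ⟨η, hη⟩
  have hξ : ξ ∈ DT := hadjoint_mapsTo.image_subset <|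
    Set.preimage_subset_image_of_inverse (G.leftInverse_adjoint_of_norm_map hG) _ h
  exact ⟨hξ, heq ⟨ξ, hξ⟩⟩

/-- If `T, T'` are closed densely defined operators, `G` is a bounded isometry with
`G·T ⊆ T'·G` and `G*·T' ⊆ T·G*`, then `G·T = T'·G`: whenever `Gξ ∈ dom T'`, already
`ξ ∈ dom T` and `T'Gξ = GTξ`. -/
theorem stmt_11 {H H' : Type*}
    [NormedAddCommGroup H] [InnerProductSpace ℂ H] [CompleteSpace H]
    [NormedAddCommGroup H'] [InnerProductSpace ℂ H'] [CompleteSpace H']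
    (DT : Submodule ℂ H) (hDT : Dense (DT : Set H))
    (DT' : Submodule ℂ H') (hDT' : Dense (DT' : Set H'))
    (T : DT →ₗ[ℂ] H) (T' : DT' →ₗ[ℂ] H')
    (hTc : IsClosedOp DT T) (hT'c : IsClosedOp DT' T')
    (G : H →L[ℂ] H') (hG : ∀ x : H, ‖G x‖ = ‖x‖)
    (hmem : ∀ ξ : DT, G (ξ : H) ∈ DT')
    (heq : ∀ ξ : DT, G (T ξ) = T' ⟨G (ξ : H), hmem ξ⟩)
    (hmem' : ∀ η : DT', ContinuousLinearMap.adjoint G (η : H') ∈ DT)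
    (heq' : ∀ η : DT', ContinuousLinearMap.adjoint G (T' η) =
      T ⟨ContinuousLinearMap.adjoint G (η : H'), hmem' η⟩) :
    ∀ (ξ : H) (h : G ξ ∈ DT'), ∃ hξ : ξ ∈ DT, G (T ⟨ξ, hξ⟩) = T' ⟨G ξ, h⟩ :=
  stmt_11_general DT DT' T T' G hG hmem heq hmem'
end

section
/- Let M be a von Neumann algebra on a Hilbert space H with commutant M', and Ω ∈ H a cyclic and separating vector for M. Let Δ and J be the modular operator and modular conjugation of (M, Ω), and S = JΔ^{1/2}, F = S* the closed Tomita operators, so that S has core MΩ with SxΩ = x*Ω for x ∈ M, and F has core M'Ω with FyΩ = y*Ω for y ∈ M'. For ξ ∈ H, define the operator L(ξ) with domain M'Ω by L(ξ)yΩ = yξ for y ∈ M'. Then the following are equivalent: (a) Ω ∈ dom(L(ξ)*); (b) ξ ∈ dom(Δ^{1/2}). Moreover, if either holds, then L(ξ) is closable and Sξ = L(ξ)*Ω. -/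
/-!
Both directions rest on the identity `⟪yξ, Ω⟫ = ⟪ξ, y*Ω⟫ = ⟪ξ, F(yΩ)⟫` for `y ∈ M'`.
If `ξ ∈ dom S`, adjointness of `S` and `F` turns it into `⟪yξ, Ω⟫ = ⟪yΩ, Sξ⟫`, so `Sξ`
witnesses `Ω ∈ dom L(ξ)*`. Conversely, if `⟪yξ, Ω⟫ = ⟪yΩ, ζ⟫` for all `y ∈ M'`, then the
closed condition `⟪v, ξ⟫ = ⟪ζ, u⟫` holds at the points `(yΩ, y*Ω)` of the graph of `F`,
hence on the whole graph because `M'Ω` is a core; so `ξ ∈ dom F* = dom S` with `Sξ = ζ`.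
Closability: applying (a) to `z*y` gives `⟪yξ, zΩ⟫ = ⟪yΩ, zζ⟫`, and `M'Ω` is dense
because a vector separating for `M` is cyclic for `M'` (the projection onto the closure
of `M'Ω` lies in `M'' = M` and fixes `Ω`).
-/

open Filter Topology

section Orbit

variable {H : Type*} [NormedAddCommGroup H] [InnerProductSpace ℂ H]

noncomputable def orbitSubmodule (A : Subalgebra ℂ (H →L[ℂ] H)) (v : H) : Submodule ℂ H :=
  (Subalgebra.toSubmodule A).map (ContinuousLinearMap.apply ℂ H v : (H →L[ℂ] H) →ₗ[ℂ] H)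

theorem mem_orbitSubmodule {A : Subalgebra ℂ (H →L[ℂ] H)} {v w : H} :
    w ∈ orbitSubmodule A v ↔ ∃ a ∈ A, a v = w := by
  simp [orbitSubmodule]

theorem topologicalClosure_orbitSubmodule_mem_invtSubmodule {A : Subalgebra ℂ (H →L[ℂ] H)}
    (v : H) {a : H →L[ℂ] H} (ha : a ∈ A) :
    (orbitSubmodule A v).topologicalClosure ∈ Module.End.invtSubmodule (a : H →ₗ[ℂ] H) := by
  have hmaps : Set.MapsTo a (orbitSubmodule A v) (orbitSubmodule A v) := by
    rintro _ hw
    obtain ⟨b, hb, rfl⟩ := mem_orbitSubmodule.1 hw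
    exact mem_orbitSubmodule.2 ⟨a * b, mul_mem ha hb, rfl⟩
  rw [Module.End.mem_invtSubmodule_iff_forall_mem_of_mem]
  intro w hw
  rw [← SetLike.mem_coe, Submodule.topologicalClosure_coe] at hw ⊢
  exact hmaps.closure a.continuous hw

theorem VonNeumannAlgebra.dense_orbitSubmodule_commutant [CompleteSpace H]
    {M : VonNeumannAlgebra H} {Ω : H} (hsep : ∀ x ∈ M, x Ω = 0 → x = 0) :
    Dense (orbitSubmodule M.commutant.toSubalgebra Ω : Set H) := by
  set K := (orbitSubmodule M.commutant.toSubalgebra Ω).topologicalClosure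
  have hPM : K.starProjection ∈ M := by
    refine (VonNeumannAlgebra.IsStarProjection.mem_iff isStarProjection_starProjection M).2 ?_
    intro y hy
    rw [Submodule.range_starProjection]
    exact topologicalClosure_orbitSubmodule_mem_invtSubmodule Ω hy
  have hΩ : Ω ∈ K := (orbitSubmodule _ Ω).le_topologicalClosure
    (mem_orbitSubmodule.2 ⟨1, one_mem _, rfl⟩)
  have hP : 1 - K.starProjection = 0 :=
    hsep _ (sub_mem (one_mem M) hPM) (by simp [Submodule.starProjection_eq_self_iff.2 hΩ])
  rw [Submodule.dense_iff_topologicalClosure_eq_top]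
  change K = ⊤
  rw [← Submodule.range_starProjection K, ← sub_eq_zero.1 hP]
  exact LinearMap.range_id

end Orbit

theorem inner_apply_left_eq_inner_star_apply {H : Type*} [NormedAddCommGroup H]
    [InnerProductSpace ℂ H] [CompleteSpace H] (y : H →L[ℂ] H) (ξ η : H) :
    inner ℂ (y ξ) η = inner ℂ ξ ((star y) η) := by
  rw [ContinuousLinearMap.star_eq_adjoint, ContinuousLinearMap.adjoint_inner_right]

theorem mem_closure_image_prod_of_forall_dist_lt {ι E F : Type*} [PseudoMetricSpace E]
    [PseudoMetricSpace F] {s : Set ι} {f : ι → E} {g : ι → F} {a : E} {b : F}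
    (h : ∀ ε > 0, ∃ i ∈ s, dist (f i) a < ε ∧ dist (g i) b < ε) :
    (a, b) ∈ closure ((fun i => (f i, g i)) '' s) := by
  refine Metric.mem_closure_iff.2 fun ε hε => ?_
  obtain ⟨i, hi, hf, hg⟩ := h ε hε
  refine ⟨_, Set.mem_image_of_mem _ hi, ?_⟩
  rw [dist_comm, Prod.dist_eq]
  exact max_lt hf hg

section Tomita

variable {H : Type*} [NormedAddCommGroup H] [InnerProductSpace ℂ H] [CompleteSpace H]
  {M : VonNeumannAlgebra H} {Ω : H} {DS DF : Submodule ℂ H}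
  {S : DS →ₛₗ[starRingEnd ℂ] H} {F : DF →ₛₗ[starRingEnd ℂ] H}

theorem inner_commutant_apply_eq_inner_tomita
    (hFmem : ∀ y ∈ M.commutant, y Ω ∈ DF)
    (hFval : ∀ y, ∀ hy : y ∈ M.commutant, F ⟨y Ω, hFmem y hy⟩ = (star y) Ω)
    (hadj : ∀ (ξ : DS) (η : DF), (inner ℂ (S ξ) ((η : H)) : ℂ) = inner ℂ (F η) ((ξ : H)))
    {ξ : H} (hξ : ξ ∈ DS) {y : H →L[ℂ] H} (hy : y ∈ M.commutant) :
    inner ℂ (y ξ) Ω = inner ℂ (y Ω) (S ⟨ξ, hξ⟩) := by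
  have h := hadj ⟨ξ, hξ⟩ ⟨y Ω, hFmem y hy⟩
  rw [hFval y hy] at h
  rw [inner_apply_left_eq_inner_star_apply, ← inner_conj_symm (y Ω), h, inner_conj_symm]

theorem exists_tomita_eq_of_inner_commutant_apply
    (hFcore : ∀ (η : DF) (ε : ℝ), 0 < ε →
      ∃ y ∈ M.commutant, ‖y Ω - (η : H)‖ < ε ∧ ‖(star y) Ω - F η‖ < ε)
    (hSmax : ∀ ξ ζ : H, (∀ η : DF, (inner ℂ (F η) ξ : ℂ) = inner ℂ ζ ((η : H))) →
      ∃ h : ξ ∈ DS, S ⟨ξ, h⟩ = ζ)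
    {ξ ζ : H} (hζ : ∀ y ∈ M.commutant, inner ℂ (y ξ) Ω = inner ℂ (y Ω) ζ) :
    ∃ h : ξ ∈ DS, S ⟨ξ, h⟩ = ζ := by
  refine hSmax ξ ζ fun η => ?_
  set C : Set (H × H) := {p | inner ℂ p.2 ξ = inner ℂ ζ p.1}
  have hC : IsClosed C := isClosed_eq (by fun_prop) (by fun_prop)
  have hgraph : (fun y : H →L[ℂ] H => (y Ω, (star y) Ω)) '' M.commutant ⊆ C := by
    rintro _ ⟨y, hy, rfl⟩
    change inner ℂ ((star y) Ω) ξ = inner ℂ ζ (y Ω)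
    rw [← inner_conj_symm, ← inner_apply_left_eq_inner_star_apply, hζ y hy, inner_conj_symm]
  exact closure_minimal hgraph hC <| mem_closure_image_prod_of_forall_dist_lt fun ε hε => by
    simpa only [dist_eq_norm, SetLike.mem_coe] using hFcore η ε hε

theorem eq_zero_of_tendsto_commutant_apply
    (hsep : ∀ x ∈ M, x Ω = 0 → x = 0) {ξ ζ : H}
    (hζ : ∀ y ∈ M.commutant, inner ℂ (y ξ) Ω = inner ℂ (y Ω) ζ)
    {y : ℕ → H →L[ℂ] H} (hy : ∀ n, y n ∈ M.commutant)
    (hyΩ : Tendsto (fun n => y n Ω) atTop (𝓝 0)) {χ : H}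
    (hyξ : Tendsto (fun n => y n ξ) atTop (𝓝 χ)) :
    χ = 0 := by
  refine (VonNeumannAlgebra.dense_orbitSubmodule_commutant hsep).eq_zero_of_inner_left ℂ ?_
  rintro _ hw
  obtain ⟨z, hz, rfl⟩ := mem_orbitSubmodule.1 hw
  have hn : ∀ n, inner ℂ (y n ξ) (z Ω) = inner ℂ (y n Ω) (z ζ) := fun n => by
    have h := hζ _ (mul_mem (star_mem hz) (hy n))
    change inner ℂ (star z (y n ξ)) Ω = inner ℂ (star z (y n Ω)) ζ at h
    rwa [ContinuousLinearMap.star_eq_adjoint, ContinuousLinearMap.adjoint_inner_left,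
      ContinuousLinearMap.adjoint_inner_left] at h
  have hlim := hyξ.inner (𝕜 := ℂ) (tendsto_const_nhds (x := z Ω))
  simp only [hn] at hlim
  simpa using tendsto_nhds_unique hlim (hyΩ.inner (𝕜 := ℂ) tendsto_const_nhds)

end Tomita

theorem stmt_13_general {H : Type*} [NormedAddCommGroup H] [InnerProductSpace ℂ H] [CompleteSpace H]
    (M : VonNeumannAlgebra H) (Ω : H)
    (hsep : ∀ x ∈ M, x Ω = 0 → x = 0)
    (DS DF : Submodule ℂ H)
    (S : DS →ₛₗ[starRingEnd ℂ] H) (F : DF →ₛₗ[starRingEnd ℂ] H)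
    -- `F yΩ = y*Ω` for `y ∈ M'`
    (hFmem : ∀ y ∈ M.commutant, y Ω ∈ DF)
    (hFval : ∀ y, ∀ hy : y ∈ M.commutant, F ⟨y Ω, hFmem y hy⟩ = (star y) Ω)
    -- `M'Ω` is a core for `F`
    (hFcore : ∀ (η : DF) (ε : ℝ), 0 < ε →
      ∃ y ∈ M.commutant, ‖y Ω - (η : H)‖ < ε ∧ ‖(star y) Ω - F η‖ < ε)
    -- `F = S*` and `S = F*` (mutually adjoint antilinear operators)
    (hadj : ∀ (ξ : DS) (η : DF), (inner ℂ (S ξ) ((η : H)) : ℂ) = inner ℂ (F η) ((ξ : H)))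
    (hSmax : ∀ ξ ζ : H, (∀ η : DF, (inner ℂ (F η) ξ : ℂ) = inner ℂ ζ ((η : H))) →
      ∃ h : ξ ∈ DS, S ⟨ξ, h⟩ = ζ)
    (ξ : H) :
    -- (a) `Ω ∈ dom L(ξ)*` ↔ (b) `ξ ∈ dom Δ^{1/2} = DS`
    ((∃ ζ : H, ∀ y ∈ M.commutant, (inner ℂ (y ξ) Ω : ℂ) = inner ℂ (y Ω) ζ) ↔ ξ ∈ DS) ∧
    -- and if so, `L(ξ)` is closable and `S ξ = L(ξ)* Ω`
    (∀ hξ : ξ ∈ DS,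
      (∀ y : ℕ → (H →L[ℂ] H), (∀ n, y n ∈ M.commutant) →
        Tendsto (fun n => (y n) Ω) atTop (𝓝 0) →
        ∀ χ : H, Tendsto (fun n => (y n) ξ) atTop (𝓝 χ) → χ = 0) ∧
      (∀ y ∈ M.commutant, (inner ℂ (y ξ) Ω : ℂ) = inner ℂ (y Ω) (S ⟨ξ, hξ⟩))) := by
  have hkey : ∀ hξ : ξ ∈ DS, ∀ y ∈ M.commutant, inner ℂ (y ξ) Ω = inner ℂ (y Ω) (S ⟨ξ, hξ⟩) :=
    fun hξ _ hy => inner_commutant_apply_eq_inner_tomita hFmem hFval hadj hξ hy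
  refine ⟨⟨fun ⟨ζ, hζ⟩ => ?_, fun hξ => ⟨S ⟨ξ, hξ⟩, hkey hξ⟩⟩, fun hξ => ⟨?_, hkey hξ⟩⟩
  · exact (exists_tomita_eq_of_inner_commutant_apply hFcore hSmax hζ).1
  · exact fun y hy hyΩ χ hyξ =>
      eq_zero_of_tendsto_commutant_apply hsep (hkey hξ) hy hyΩ hyξ

/-- Tomita–Takesaki theory: let `M` be a von Neumann algebra with cyclic separating
vector `Ω`, let `S` (with domain `DS = dom Δ^{1/2}`) and `F = S*` (with domain `DF`)
be the closed antilinear Tomita operators, so that `S` has core `MΩ` with `S xΩ = x*Ω`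
and `F` has core `M'Ω` with `F yΩ = y*Ω`.  For `ξ ∈ H`, let `L(ξ)` be the operator
with domain `M'Ω` given by `L(ξ) yΩ = yξ`.  Then `Ω ∈ dom (L(ξ)*)` iff
`ξ ∈ dom Δ^{1/2} = DS`, and in that case `L(ξ)` is closable and `S ξ = L(ξ)* Ω`. -/
theorem stmt_13 {H : Type*} [NormedAddCommGroup H] [InnerProductSpace ℂ H] [CompleteSpace H]
    (M : VonNeumannAlgebra H) (Ω : H)
    (hcyc : Dense {ξ : H | ∃ x ∈ M, x Ω = ξ})
    (hsep : ∀ x ∈ M, x Ω = 0 → x = 0)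
    (DS DF : Submodule ℂ H)
    (S : DS →ₛₗ[starRingEnd ℂ] H) (F : DF →ₛₗ[starRingEnd ℂ] H)
    -- `S xΩ = x*Ω` for `x ∈ M`
    (hSmem : ∀ x ∈ M, x Ω ∈ DS)
    (hSval : ∀ x, ∀ hx : x ∈ M, S ⟨x Ω, hSmem x hx⟩ = (star x) Ω)
    -- `F yΩ = y*Ω` for `y ∈ M'`
    (hFmem : ∀ y ∈ M.commutant, y Ω ∈ DF)
    (hFval : ∀ y, ∀ hy : y ∈ M.commutant, F ⟨y Ω, hFmem y hy⟩ = (star y) Ω)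
    -- `MΩ` is a core for `S`
    (hScore : ∀ (ξ : DS) (ε : ℝ), 0 < ε →
      ∃ x ∈ M, ‖x Ω - (ξ : H)‖ < ε ∧ ‖(star x) Ω - S ξ‖ < ε)
    -- `M'Ω` is a core for `F`
    (hFcore : ∀ (η : DF) (ε : ℝ), 0 < ε →
      ∃ y ∈ M.commutant, ‖y Ω - (η : H)‖ < ε ∧ ‖(star y) Ω - F η‖ < ε)
    -- `S` and `F` are closed
    (hSclosed : ∀ (ξ : ℕ → DS) (ζ η : H),
      Tendsto (fun n => ((ξ n : H))) atTop (𝓝 ζ) → Tendsto (fun n => S (ξ n)) atTop (𝓝 η) →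
      ∃ h : ζ ∈ DS, S ⟨ζ, h⟩ = η)
    (hFclosed : ∀ (η : ℕ → DF) (ζ χ : H),
      Tendsto (fun n => ((η n : H))) atTop (𝓝 ζ) → Tendsto (fun n => F (η n)) atTop (𝓝 χ) →
      ∃ h : ζ ∈ DF, F ⟨ζ, h⟩ = χ)
    -- `F = S*` and `S = F*` (mutually adjoint antilinear operators)
    (hadj : ∀ (ξ : DS) (η : DF), (inner ℂ (S ξ) ((η : H)) : ℂ) = inner ℂ (F η) ((ξ : H)))
    (hFmax : ∀ η ζ : H, (∀ ξ : DS, (inner ℂ (S ξ) η : ℂ) = inner ℂ ζ ((ξ : H))) →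
      ∃ h : η ∈ DF, F ⟨η, h⟩ = ζ)
    (hSmax : ∀ ξ ζ : H, (∀ η : DF, (inner ℂ (F η) ξ : ℂ) = inner ℂ ζ ((η : H))) →
      ∃ h : ξ ∈ DS, S ⟨ξ, h⟩ = ζ)
    (ξ : H) :
    -- (a) `Ω ∈ dom L(ξ)*` ↔ (b) `ξ ∈ dom Δ^{1/2} = DS`
    ((∃ ζ : H, ∀ y ∈ M.commutant, (inner ℂ (y ξ) Ω : ℂ) = inner ℂ (y Ω) ζ) ↔ ξ ∈ DS) ∧
    -- and if so, `L(ξ)` is closable and `S ξ = L(ξ)* Ω`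
    (∀ hξ : ξ ∈ DS,
      (∀ y : ℕ → (H →L[ℂ] H), (∀ n, y n ∈ M.commutant) →
        Tendsto (fun n => (y n) Ω) atTop (𝓝 0) →
        ∀ χ : H, Tendsto (fun n => (y n) ξ) atTop (𝓝 χ) → χ = 0) ∧
      (∀ y ∈ M.commutant, (inner ℂ (y ξ) Ω : ℂ) = inner ℂ (y Ω) (S ⟨ξ, hξ⟩))) :=
  stmt_13_general M Ω hsep DS DF S F hFmem hFval hFcore hadj hSmax ξ
end
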